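/- arXiv:math/0005282 — 3 statements merged into one kernel-verified Lean document; each statement's English description precedes it below -/
import Mathlib

section
/- Let $P(X_1,\dots,X_n)$ be an element of the free Lie algebra on $n$ generators over $\mathbb{C}$ such that for every $k\in\mathbb{N}$ and every $X_1,\dots,X_n\in\mathfrak{gl}_k(\mathbb{C})$, the evaluation $P(X_1,\dots,X_n)=0$. Then $P=0$ in the free Lie algebra. -/
attribute [local instance 100] LieRing.ofAssociativeRing

/-!
Let `φ : F → A` be the canonical map from the free Lie algebra on `X` to the free associative
algebra `A = K[FreeMonoid X]`, and let `δ : A → F` send a word `x₁ ⋯ xₘ` to the right-normed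
bracket `⁅x₁, ⁅x₂, ⋯ xₘ⁆⁆` (Dynkin's map). Then `δ ∘ φ` is a derivation of `F` fixing the
generators, so it multiplies a Lie polynomial of degree `m` by `m`; in characteristic zero it is
therefore injective, and so is `φ`.

To see `φ P = 0`, let `A` act on the quotient of `A` by the left ideal of words of length `≥ d`.
For finite `X` this quotient is finite-dimensional, so `P` acts on it by zero, while `φ P` sends
the class of `1` to the class of `φ P`. Hence `φ P` has no word of length `< d`, for every `d`.
-/

open Module End

theorem LieDerivation.lie_mem_eigenspace_add {R L : Type*} [CommRing R] [LieRing L]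
    [LieAlgebra R L] (D : LieDerivation R L L) {a b : R} {x y : L}
    (hx : x ∈ eigenspace (D : End R L) a) (hy : y ∈ eigenspace (D : End R L) b) :
    ⁅x, y⁆ ∈ eigenspace (D : End R L) (a + b) := by
  rw [mem_eigenspace_iff, LieDerivation.coeFn_coe] at hx hy ⊢
  rw [D.apply_lie_eq_add, hx, hy, smul_lie, lie_smul, add_smul, add_comm]

theorem LieDerivation.injective_of_lieSpan_eq_top {K L : Type*} [Field K] [CharZero K]
    [LieRing L] [LieAlgebra K L] (D : LieDerivation K L L) {s : Set L}
    (hs : LieSubalgebra.lieSpan K L s = ⊤) (hD : ∀ x ∈ s, D x = x) :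
    Function.Injective D := by
  let M := Submodule.span K (⋃ m : ℕ, (eigenspace (D : End K L) (m + 1) : Set L))
  have hlie : ∀ {x y}, x ∈ M → y ∈ M → ⁅x, y⁆ ∈ M := by
    intro x y hx hy
    induction hx, hy using Submodule.span_induction₂ with
    | mem_mem x y hx hy =>
      obtain ⟨m, hm⟩ := Set.mem_iUnion.mp hx
      obtain ⟨m', hm'⟩ := Set.mem_iUnion.mp hy
      refine Submodule.subset_span (Set.mem_iUnion.mpr ⟨m + m' + 1, ?_⟩)
      have := D.lie_mem_eigenspace_add hm hm'
      rwa [show (m + 1 + (m' + 1) : K) = ((m + m' + 1 : ℕ) : K) + 1 by push_cast; ring] at this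
    | zero_left y hy => simp
    | zero_right x hx => simp
    | add_left x y z _ _ _ hx hy => simpa [add_lie] using add_mem hx hy
    | add_right x y z _ _ _ hx hy => simpa [lie_add] using add_mem hx hy
    | smul_left r x y _ _ h => simpa [smul_lie] using M.smul_mem r h
    | smul_right r x y _ _ h => simpa [lie_smul] using M.smul_mem r h
  have hM : M = ⊤ := by
    have : LieSubalgebra.lieSpan K L s ≤ { M with lie_mem' := hlie } := by
      rw [LieSubalgebra.lieSpan_le]
      intro x hx
      refine Submodule.subset_span (Set.mem_iUnion.mpr ⟨0, ?_⟩)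
      simpa [mem_eigenspace_iff] using hD x hx
    rw [hs, top_le_iff] at this
    exact congrArg LieSubalgebra.toSubmodule this
  have hpos : M ≤ ⨆ (μ : K) (_ : μ ≠ 0), eigenspace (D : End K L) μ := by
    rw [Submodule.span_le]
    intro x hx
    obtain ⟨m, hm⟩ := Set.mem_iUnion.mp hx
    exact Submodule.mem_iSup_of_mem _ (Submodule.mem_iSup_of_mem (Nat.cast_add_one_ne_zero m) hm)
  have hdisj := (iSupIndep_def.mp (eigenspaces_iSupIndep (D : End K L))) 0
  rw [← LieDerivation.coeFn_coe, ← LinearMap.ker_eq_bot, ← eigenspace_zero]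
  exact hdisj.eq_bot_of_le (hM ▸ le_top |>.trans hpos)

namespace FreeLieAlgebra

variable {R : Type*} [CommRing R] {X : Type*}

theorem lift_comp {L₁ L₂ : Type*} [LieRing L₁] [LieAlgebra R L₁] [LieRing L₂] [LieAlgebra R L₂]
    (g : L₁ →ₗ⁅R⁆ L₂) (f : X → L₁) : lift R (g ∘ f) = g.comp (lift R f) :=
  hom_ext fun x => by simp

variable (R X)

theorem lieSpan_range_of :
    LieSubalgebra.lieSpan R (FreeLieAlgebra R X) (Set.range (of R)) = ⊤ := by
  set S := LieSubalgebra.lieSpan R (FreeLieAlgebra R X) (Set.range (of R))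
  let g : FreeLieAlgebra R X →ₗ⁅R⁆ S :=
    lift R fun x => ⟨of R x, LieSubalgebra.subset_lieSpan (Set.mem_range_self x)⟩
  have hg : S.incl.comp g = LieHom.id := hom_ext fun x => by simp [g]
  refine eq_top_iff.mpr fun u _ => ?_
  have hu : S.incl (g u) = u := by simpa using congr($hg u)
  exact hu ▸ (g u).2

noncomputable def toMonoidAlgebra : FreeLieAlgebra R X →ₗ⁅R⁆ MonoidAlgebra R (FreeMonoid X) :=
  lift R fun x => MonoidAlgebra.of R _ (FreeMonoid.of x)

noncomputable def rightNormedBracket : List X → FreeLieAlgebra R X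
  | [] => 0
  | [x] => of R x
  | x :: y :: l => ⁅of R x, rightNormedBracket (y :: l)⁆

noncomputable def adAction :
    MonoidAlgebra R (FreeMonoid X) →ₐ[R] Module.End R (FreeLieAlgebra R X) :=
  MonoidAlgebra.lift R _ _ (FreeMonoid.lift fun x => LieAlgebra.ad R _ (of R x))

noncomputable def augmentation : MonoidAlgebra R (FreeMonoid X) →ₐ[R] R :=
  MonoidAlgebra.lift R R _ (FreeMonoid.lift fun _ => 0)

noncomputable def dynkinMap : MonoidAlgebra R (FreeMonoid X) →ₗ[R] FreeLieAlgebra R X :=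
  Finsupp.linearCombination R (fun w : FreeMonoid X => rightNormedBracket R X w.toList) ∘ₗ
    (MonoidAlgebra.coeffLinearEquiv R).toLinearMap

variable {R X}

theorem rightNormedBracket_cons (x : X) {l : List X} (hl : l ≠ []) :
    rightNormedBracket R X (x :: l) = ⁅of R x, rightNormedBracket R X l⁆ := by
  cases l with
  | nil => exact absurd rfl hl
  | cons y l => rfl

theorem rightNormedBracket_append (w : List X) {l : List X} (hl : l ≠ []) :
    rightNormedBracket R X (w ++ l) =
      (w.map fun x => LieAlgebra.ad R _ (of R x)).prod (rightNormedBracket R X l) := by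
  induction w with
  | nil => simp
  | cons x w ih =>
    rw [List.cons_append, rightNormedBracket_cons x (by simp [hl]), ih]
    simp

theorem dynkinMap_single (w : FreeMonoid X) (c : R) :
    dynkinMap R X (MonoidAlgebra.single w c) = c • rightNormedBracket R X w.toList :=
  Finsupp.linearCombination_single R c w

theorem adAction_single (w : FreeMonoid X) (c : R) :
    adAction R X (MonoidAlgebra.single w c) =
      c • (w.toList.map fun x => LieAlgebra.ad R _ (of R x)).prod := by
  simp [adAction, MonoidAlgebra.lift_single, FreeMonoid.lift_apply]

theorem augmentation_single (w : FreeMonoid X) (c : R) :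
    augmentation R X (MonoidAlgebra.single w c) = c * 0 ^ w.length := by
  simp [augmentation, MonoidAlgebra.lift_single, FreeMonoid.lift_apply, FreeMonoid.length]

theorem dynkinMap_mul (a b : MonoidAlgebra R (FreeMonoid X)) :
    dynkinMap R X (a * b) =
      adAction R X a (dynkinMap R X b) + augmentation R X b • dynkinMap R X a := by
  induction a using MonoidAlgebra.induction_linear with
  | zero => simp
  | add a a' ha ha' =>
    rw [add_mul, map_add, ha, ha', map_add, LinearMap.add_apply, map_add, smul_add]
    abel
  | single w c =>
  induction b using MonoidAlgebra.induction_linear with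
  | zero => simp
  | add b b' hb hb' =>
    rw [mul_add, map_add, hb, hb', map_add, map_add, map_add, add_smul]
    abel
  | single v d =>
    rw [MonoidAlgebra.single_mul_single]
    cases v using FreeMonoid.casesOn with
    | one =>
      simp [dynkinMap_single, adAction_single, augmentation_single, rightNormedBracket,
        smul_smul, mul_comm]
    | of_mul x v =>
      simp [dynkinMap_single, adAction_single, augmentation_single, FreeMonoid.toList_mul,
        rightNormedBracket_append _ (List.cons_ne_nil x _), smul_smul, mul_comm]

theorem toMonoidAlgebra_of (x : X) :
    toMonoidAlgebra R X (of R x) = MonoidAlgebra.single (FreeMonoid.of x) 1 :=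
  lift_of_apply _ x

theorem augmentation_toMonoidAlgebra (u : FreeLieAlgebra R X) :
    augmentation R X (toMonoidAlgebra R X u) = 0 := by
  have : (augmentation R X).toLieHom.comp (toMonoidAlgebra R X) = 0 :=
    hom_ext fun x => by simp [toMonoidAlgebra_of, augmentation_single]
  exact congr($this u)

theorem adAction_toMonoidAlgebra (u : FreeLieAlgebra R X) :
    adAction R X (toMonoidAlgebra R X u) = LieAlgebra.ad R _ u := by
  have : (adAction R X).toLieHom.comp (toMonoidAlgebra R X) = LieAlgebra.ad R _ :=
    hom_ext fun x => by simp [toMonoidAlgebra_of, adAction_single]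
  exact congr($this u)

variable (R X) in
noncomputable def dynkinOperator :
    LieDerivation R (FreeLieAlgebra R X) (FreeLieAlgebra R X) where
  toLinearMap := dynkinMap R X ∘ₗ (toMonoidAlgebra R X).toLinearMap
  leibniz' u v := by
    simp [LieRing.of_associative_ring_bracket, dynkinMap_mul, adAction_toMonoidAlgebra,
      augmentation_toMonoidAlgebra]

theorem dynkinOperator_apply (u : FreeLieAlgebra R X) :
    dynkinOperator R X u = dynkinMap R X (toMonoidAlgebra R X u) := rfl

theorem dynkinOperator_of (x : X) : dynkinOperator R X (of R x) = of R x := by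
  simp [dynkinOperator_apply, toMonoidAlgebra_of, dynkinMap_single, rightNormedBracket]

theorem toMonoidAlgebra_injective (K X : Type*) [Field K] [CharZero K] :
    Function.Injective (toMonoidAlgebra K X) := fun u v h =>
  (dynkinOperator K X).injective_of_lieSpan_eq_top (lieSpan_range_of K X)
    (by rintro _ ⟨x, rfl⟩; exact dynkinOperator_of x) (by simp only [dynkinOperator_apply, h])

theorem lift_apply_eq_zero_of_forall_matrix {K ι : Type*} [Field K] {P : FreeLieAlgebra K ι}
    (h : ∀ (k : ℕ) (M : ι → Matrix (Fin k) (Fin k) K), lift K M P = 0)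
    {V : Type*} [AddCommGroup V] [Module K V] [FiniteDimensional K V] (f : ι → End K V) :
    lift K f P = 0 := by
  let e := (algEquivMatrix (Module.finBasis K V)).toAlgHom.toLieHom
  apply (algEquivMatrix (Module.finBasis K V)).injective
  have := h _ (e ∘ f)
  rw [lift_comp, LieHom.comp_apply] at this
  simpa [e] using this

end FreeLieAlgebra

namespace MonoidAlgebra

variable (R X : Type*) [CommRing R]

noncomputable def lengthGEIdeal (d : ℕ) :
    Submodule (MonoidAlgebra R (FreeMonoid X)) (MonoidAlgebra R (FreeMonoid X)) where
  __ := (supported R R {w : FreeMonoid X | d ≤ w.length}).toAddSubmonoid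
  smul_mem' b a ha := by
    classical
    intro w hw
    obtain ⟨u, -, v, hv, rfl⟩ := Finset.mem_mul.mp (support_coeff_mul_subset b a hw)
    show d ≤ (u * v).length
    rw [FreeMonoid.length_mul]
    exact le_add_left (ha hv)

variable {R X}

theorem single_mem_lengthGEIdeal {d : ℕ} {w : FreeMonoid X} (hw : d ≤ w.length) (c : R) :
    single w c ∈ lengthGEIdeal R X d := by
  classical
  refine mem_supported'.mpr fun v hv => ?_
  rw [coeff_single, Finsupp.single_apply, if_neg]
  rintro rfl
  exact hv hw

theorem eq_zero_of_forall_mem_lengthGEIdeal {a : MonoidAlgebra R (FreeMonoid X)}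
    (h : ∀ d, a ∈ lengthGEIdeal R X d) : a = 0 := by
  ext w
  exact mem_supported'.mp (h (w.length + 1)) w (by simp)

instance [Finite X] (d : ℕ) :
    Module.Finite R (MonoidAlgebra R (FreeMonoid X) ⧸ lengthGEIdeal R X d) := by
  let I := lengthGEIdeal R X d
  have hspan : Submodule.span R ((fun w => Submodule.Quotient.mk (p := I) (single w (1 : R))) ''
      {w : FreeMonoid X | w.length < d}) = ⊤ := by
    rw [eq_top_iff]
    rintro q -
    obtain ⟨a, rfl⟩ := Submodule.Quotient.mk_surjective I q
    induction a using induction_linear with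
    | zero => exact zero_mem _
    | add a b ha hb => exact add_mem ha hb
    | single w c =>
      by_cases hw : w.length < d
      · rw [← mul_one c, ← smul_eq_mul, ← smul_single, Submodule.Quotient.mk_smul]
        exact Submodule.smul_mem _ _ (Submodule.subset_span ⟨w, hw, rfl⟩)
      · rw [(Submodule.Quotient.mk_eq_zero I).mpr (single_mem_lengthGEIdeal (not_lt.mp hw) c)]
        exact zero_mem _
  exact ⟨Submodule.fg_def.mpr ⟨_, (List.finite_length_lt X d).image _, hspan⟩⟩

end MonoidAlgebra

theorem FreeLieAlgebra.toMonoidAlgebra_eq_zero_of_forall_matrix {K X : Type*} [Field K]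
    [Finite X] {P : FreeLieAlgebra K X}
    (h : ∀ (k : ℕ) (M : X → Matrix (Fin k) (Fin k) K), lift K M P = 0) :
    toMonoidAlgebra K X P = 0 := by
  refine MonoidAlgebra.eq_zero_of_forall_mem_lengthGEIdeal fun d => ?_
  let I := MonoidAlgebra.lengthGEIdeal K X d
  let ρ := (Algebra.lsmul K K (A := MonoidAlgebra K (FreeMonoid X))
    (MonoidAlgebra K (FreeMonoid X) ⧸ I)).toLieHom
  have hρ : ρ (toMonoidAlgebra K X P) = 0 := by
    rw [← LieHom.comp_apply, ← lift_comp_of (ρ.comp _)]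
    exact lift_apply_eq_zero_of_forall_matrix h _
  have h1 := congr($hρ (Submodule.Quotient.mk 1))
  simp only [AlgHom.coe_toLieHom, Algebra.lsmul_coe, LinearMap.zero_apply, ρ] at h1
  rwa [← Submodule.Quotient.mk_smul, smul_eq_mul, mul_one, Submodule.Quotient.mk_eq_zero] at h1

/-- A Lie polynomial (element of the free Lie algebra on `n`
generators over `ℂ`) vanishing identically on `gl_k(ℂ)` for all `k` is zero. -/
theorem stmt5 (n : ℕ) (P : FreeLieAlgebra ℂ (Fin n))
    (h : ∀ (k : ℕ) (X : Fin n → Matrix (Fin k) (Fin k) ℂ),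
      FreeLieAlgebra.lift ℂ X P = 0) :
    P = 0 := by
  apply FreeLieAlgebra.toMonoidAlgebra_injective ℂ (Fin n)
  rw [map_zero]
  exact FreeLieAlgebra.toMonoidAlgebra_eq_zero_of_forall_matrix h
end

section
/- Let $\mathfrak{g}$ be a Lie algebra, $\mathfrak{l}\subseteq\mathfrak{g}$ a subalgebra with an $\mathfrak{l}$-invariant complement $\mathfrak{m}$ (so $\mathfrak{g}=\mathfrak{l}\oplus\mathfrak{m}$ and $[\mathfrak{l},\mathfrak{m}]\subseteq\mathfrak{m}$). Then $(\mathfrak{g}\otimes\mathfrak{l}\oplus\mathfrak{l}\otimes\mathfrak{g})^{\mathfrak{l}} = (\mathfrak{g}^{\mathfrak{l}}\otimes\mathfrak{l}\oplus\mathfrak{l}\otimes\mathfrak{g}^{\mathfrak{l}})^{\mathfrak{l}}$, where superscript $\mathfrak{l}$ denotes invariants for the adjoint action of $\mathfrak{l}$, provided $\mathfrak{l}$ is abelian. (Without the invariant-complement hypothesis this can fail.) -/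
/-!
For `a ∈ l`, `ad a` kills `l` and preserves `m`, so it maps `g` into `m` and commutes with the
projections `P` onto `l` and `Q` onto `m`. An element `w` of `g ⊗ l + l ⊗ g` is
`(P ⊗ 1) w + (Q ⊗ P) w`, because `Q ⊗ Q` kills `g ⊗ l + l ⊗ g`; if `w` is invariant, the two
summands are invariant elements of `l ⊗ g` and `g ⊗ l`. An invariant `u ∈ l ⊗ g` equals
`∑ bᵢ ⊗ uᵢ` for a basis `(bᵢ)` of `l`, where `uᵢ` contracts the first factor of `u` against the
coordinate functional of `bᵢ` extended by zero on `m`. That functional vanishes on `[l, g] ⊆ m`,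
so the contraction commutes with `ad a` and every `uᵢ` lies in `g^l`.
-/

open scoped TensorProduct

/-- The image of `p ⊗ q` inside `g ⊗ g`, for submodules `p q ⊆ g`. -/
noncomputable def tensorSub (g : Type) [AddCommGroup g] [Module ℂ g]
    (p q : Submodule ℂ g) : Submodule ℂ (g ⊗[ℂ] g) :=
  Submodule.map₂ (TensorProduct.mk ℂ g g) p q

/-- The centralizer `g^l` of a Lie subalgebra `l`, as a submodule. -/
noncomputable def centralizerSub (g : Type) [LieRing g] [LieAlgebra ℂ g]
    (l : LieSubalgebra ℂ g) : Submodule ℂ g :=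
  ⨅ a : l, LinearMap.ker ((LieAlgebra.ad ℂ g) (a : g))

open TensorProduct

section Contraction

variable {R M N : Type*} [CommRing R] [AddCommGroup M] [Module R M] [AddCommGroup N] [Module R N]

noncomputable def contractFst (φ : Module.Dual R M) : M ⊗[R] N →ₗ[R] N :=
  TensorProduct.lid R N ∘ₗ φ.rTensor N

noncomputable def contractSnd (φ : Module.Dual R N) : M ⊗[R] N →ₗ[R] M :=
  TensorProduct.rid R M ∘ₗ φ.lTensor M

@[simp] lemma contractFst_tmul (φ : Module.Dual R M) (x : M) (y : N) :
    contractFst φ (x ⊗ₜ y) = φ x • y := rfl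

@[simp] lemma contractSnd_tmul (φ : Module.Dual R N) (x : M) (y : N) :
    contractSnd φ (x ⊗ₜ y) = φ y • x := rfl

variable {ι : Type*} [Fintype ι]

lemma sum_tmul_contractFst_eq_self {p : Submodule R M} {v : ι → M} {φ : ι → Module.Dual R M}
    (hφ : ∀ x ∈ p, ∑ i, φ i x • v i = x) {u : M ⊗[R] N}
    (hu : u ∈ Submodule.map₂ (mk R M N) p ⊤) :
    ∑ i, v i ⊗ₜ contractFst (φ i) u = u := by
  have : Submodule.map₂ (mk R M N) p ⊤ ≤
      LinearMap.eqLocus (∑ i, mk R M N (v i) ∘ₗ contractFst (φ i)) LinearMap.id :=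
    Submodule.map₂_le.2 fun x hx y _ => by
      simpa [sum_tmul, smul_tmul'] using congrArg (· ⊗ₜ[R] y) (hφ x hx)
  simpa using this hu

lemma sum_contractSnd_tmul_eq_self {q : Submodule R N} {v : ι → N} {φ : ι → Module.Dual R N}
    (hφ : ∀ y ∈ q, ∑ i, φ i y • v i = y) {u : M ⊗[R] N}
    (hu : u ∈ Submodule.map₂ (mk R M N) ⊤ q) :
    ∑ i, contractSnd (φ i) u ⊗ₜ v i = u := by
  have : Submodule.map₂ (mk R M N) ⊤ q ≤
      LinearMap.eqLocus (∑ i, (mk R M N).flip (v i) ∘ₗ contractSnd (φ i)) LinearMap.id :=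
    Submodule.map₂_le.2 fun x _ y hy => by
      simpa [tmul_sum, smul_tmul] using congrArg (x ⊗ₜ[R] ·) (hφ y hy)
  simpa using this hu

end Contraction

section LieTensor

variable {R L M N : Type*} [CommRing R] [LieRing L] [LieAlgebra R L]
  [AddCommGroup M] [Module R M] [LieRingModule L M] [LieModule R L M]
  [AddCommGroup N] [Module R N] [LieRingModule L N] [LieModule R L N]

lemma lie_map_eq_map_lie {x : L} {f₁ : M →ₗ[R] M} {f₂ : N →ₗ[R] N}
    (h₁ : ∀ m, ⁅x, f₁ m⁆ = f₁ ⁅x, m⁆) (h₂ : ∀ n, ⁅x, f₂ n⁆ = f₂ ⁅x, n⁆) (u : M ⊗[R] N) :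
    ⁅x, map f₁ f₂ u⁆ = map f₁ f₂ ⁅x, u⁆ := by
  induction u using TensorProduct.induction_on with
  | zero => simp
  | tmul m n => simp [LieModule.lie_tmul_right, h₁, h₂]
  | add u v hu hv => simp only [lie_add, map_add, hu, hv]

lemma contractFst_lie {x : L} {φ : Module.Dual R M} (hφ : ∀ m, φ ⁅x, m⁆ = 0)
    (u : M ⊗[R] N) : contractFst φ ⁅x, u⁆ = ⁅x, contractFst φ u⁆ := by
  induction u using TensorProduct.induction_on with
  | zero => simp
  | tmul m n => simp [LieModule.lie_tmul_right, hφ]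
  | add u v hu hv => simp only [lie_add, map_add, hu, hv]

lemma contractSnd_lie {x : L} {φ : Module.Dual R N} (hφ : ∀ n, φ ⁅x, n⁆ = 0)
    (u : M ⊗[R] N) : contractSnd φ ⁅x, u⁆ = ⁅x, contractSnd φ u⁆ := by
  induction u using TensorProduct.induction_on with
  | zero => simp
  | tmul m n => simp [LieModule.lie_tmul_right, hφ]
  | add u v hu hv => simp only [lie_add, map_add, hu, hv]

end LieTensor

lemma Submodule.exists_dualBasis_of_isCompl {K V : Type*} [Field K] [AddCommGroup V]
    [Module K V] {p q : Submodule K V} [FiniteDimensional K p] (h : IsCompl p q) :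
    ∃ (n : ℕ) (v : Fin n → V) (φ : Fin n → Module.Dual K V), (∀ i, v i ∈ p) ∧
      (∀ i, ∀ x ∈ q, φ i x = 0) ∧ ∀ x ∈ p, ∑ i, φ i x • v i = x := by
  let b := Module.finBasis K p
  refine ⟨_, fun i => b i, fun i => b.coord i ∘ₗ p.projectionOnto q h, fun i => (b i).2,
    fun i x hx => by simp [projectionOnto_apply_of_mem_right h hx], fun x hx => ?_⟩
  simp only [LinearMap.comp_apply, projectionOnto_apply_of_mem_left h hx, b.coord_apply]
  simp_rw [← Submodule.coe_smul_of_tower, ← Submodule.coe_sum, b.sum_repr]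

section InvariantComplement

variable {g : Type} [LieRing g] [LieAlgebra ℂ g] {l : LieSubalgebra ℂ g} {m : Submodule ℂ g}

lemma lie_mem_of_isCompl (habel : ∀ a b : g, a ∈ l → b ∈ l → ⁅a, b⁆ = 0)
    (hcompl : IsCompl l.toSubmodule m) (hinv : ∀ a ∈ l, ∀ z ∈ m, ⁅a, z⁆ ∈ m)
    {a : g} (ha : a ∈ l) (x : g) : ⁅a, x⁆ ∈ m := by
  rw [← Submodule.projection_add_projection_eq_self hcompl x, lie_add,
    habel a _ ha (Submodule.projection_apply_mem _ _), zero_add]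
  exact hinv a ha _ (Submodule.projection_apply_mem _ _)

variable (hcompl : IsCompl l.toSubmodule m) (hlie : ∀ a ∈ l, ∀ x, ⁅a, x⁆ ∈ m)
include hcompl hlie

lemma lie_projection (habel : ∀ a b : g, a ∈ l → b ∈ l → ⁅a, b⁆ = 0) {a : g} (ha : a ∈ l)
    (x : g) :
    ⁅a, l.toSubmodule.projection m hcompl x⁆ = l.toSubmodule.projection m hcompl ⁅a, x⁆ := by
  rw [habel a _ ha (Submodule.projection_apply_mem _ _),
    Submodule.projection_apply_of_mem_right hcompl (hlie a ha x)]

lemma lie_projection_compl (habel : ∀ a b : g, a ∈ l → b ∈ l → ⁅a, b⁆ = 0) {a : g} (ha : a ∈ l)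
    (x : g) :
    ⁅a, m.projection l.toSubmodule hcompl.symm x⁆ =
      m.projection l.toSubmodule hcompl.symm ⁅a, x⁆ := by
  simp only [Submodule.projection_eq_self_sub_projection hcompl, lie_sub,
    lie_projection hcompl hlie habel ha]

lemma mem_tensorSub_centralizerSub_right [FiniteDimensional ℂ l.toSubmodule]
    {u : g ⊗[ℂ] g} (hu : u ∈ tensorSub g l.toSubmodule ⊤) (hu₀ : ∀ a ∈ l, ⁅a, u⁆ = 0) :
    u ∈ tensorSub g l.toSubmodule (centralizerSub g l) := by
  obtain ⟨n, v, φ, hv, hφm, hφ⟩ := Submodule.exists_dualBasis_of_isCompl hcompl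
  rw [← sum_tmul_contractFst_eq_self hφ hu]
  refine Submodule.sum_mem _ fun i _ => Submodule.apply_mem_map₂ _ (hv i) ?_
  simp only [centralizerSub, Submodule.mem_iInf, LinearMap.mem_ker, LieAlgebra.ad_apply]
  intro a
  rw [← contractFst_lie (fun x => hφm i _ (hlie a a.2 x)), hu₀ a a.2, map_zero]

lemma mem_tensorSub_centralizerSub_left [FiniteDimensional ℂ l.toSubmodule]
    {u : g ⊗[ℂ] g} (hu : u ∈ tensorSub g ⊤ l.toSubmodule) (hu₀ : ∀ a ∈ l, ⁅a, u⁆ = 0) :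
    u ∈ tensorSub g (centralizerSub g l) l.toSubmodule := by
  obtain ⟨n, v, φ, hv, hφm, hφ⟩ := Submodule.exists_dualBasis_of_isCompl hcompl
  rw [← sum_contractSnd_tmul_eq_self hφ hu]
  refine Submodule.sum_mem _ fun i _ => Submodule.apply_mem_map₂ _ ?_ (hv i)
  simp only [centralizerSub, Submodule.mem_iInf, LinearMap.mem_ker, LieAlgebra.ad_apply]
  intro a
  rw [← contractSnd_lie (fun x => hφm i _ (hlie a a.2 x)), hu₀ a a.2, map_zero]

lemma mem_sup_tensorSub_centralizerSub [FiniteDimensional ℂ l.toSubmodule]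
    (habel : ∀ a b : g, a ∈ l → b ∈ l → ⁅a, b⁆ = 0) {w : g ⊗[ℂ] g}
    (hw : w ∈ tensorSub g ⊤ l.toSubmodule ⊔ tensorSub g l.toSubmodule ⊤)
    (hw₀ : ∀ a ∈ l, ⁅a, w⁆ = 0) :
    w ∈ tensorSub g (centralizerSub g l) l.toSubmodule ⊔
      tensorSub g l.toSubmodule (centralizerSub g l) := by
  set P := l.toSubmodule.projection m hcompl
  set Q := m.projection l.toSubmodule hcompl.symm
  have hPQ : P + Q = LinearMap.id := Submodule.projection_add_projection_eq_id hcompl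
  have hQ : ∀ x ∈ l, Q x = 0 := fun x hx =>
    Submodule.projection_apply_of_mem_right hcompl.symm hx
  have hQQ : map Q Q w = 0 := by
    refine (sup_le ?_ ?_ : _ ≤ LinearMap.ker (map Q Q)) hw <;> refine Submodule.map₂_le.2 ?_
    · intro x _ y hy
      simp [hQ y hy]
    · intro x hx y _
      simp [hQ x hx]
  have hsplit : map P LinearMap.id w + map Q P w = w := by
    have : map P LinearMap.id + map Q P + map Q Q = LinearMap.id := by
      rw [add_assoc, ← map_add_right, hPQ, ← map_add_left, hPQ, map_id]
    simpa [hQQ] using LinearMap.congr_fun this w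
  rw [← hsplit, add_comm]
  refine Submodule.add_mem_sup (mem_tensorSub_centralizerSub_left hcompl hlie ?_ fun a ha => ?_)
    (mem_tensorSub_centralizerSub_right hcompl hlie ?_ fun a ha => ?_)
  · exact Submodule.map₂_le_map₂ le_top (Submodule.range_projection hcompl).le
      ((range_map Q P).le (LinearMap.mem_range_self _ w))
  · rw [lie_map_eq_map_lie (lie_projection_compl hcompl hlie habel ha)
      (lie_projection hcompl hlie habel ha), hw₀ a ha, map_zero]
  · exact Submodule.map₂_le_map₂ (Submodule.range_projection hcompl).le le_top
      ((range_map P LinearMap.id).le (LinearMap.mem_range_self _ w))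
  · rw [lie_map_eq_map_lie (lie_projection hcompl hlie habel ha) (fun _ => rfl), hw₀ a ha,
      map_zero]

end InvariantComplement

/-- If `l ⊆ g` is an abelian subalgebra with an `l`-invariant
complement `m`, then `(g⊗l ⊕ l⊗g)^l = (g^l⊗l ⊕ l⊗g^l)^l`. -/
theorem stmt8 (g : Type) [LieRing g] [LieAlgebra ℂ g] [FiniteDimensional ℂ g]
    (l : LieSubalgebra ℂ g) (habel : ∀ a b : g, a ∈ l → b ∈ l → ⁅a, b⁆ = 0)
    (m : Submodule ℂ g) (hcompl : IsCompl l.toSubmodule m)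
    (hinv : ∀ a ∈ l, ∀ z ∈ m, ⁅a, z⁆ ∈ m) :
    {w : g ⊗[ℂ] g |
        w ∈ tensorSub g ⊤ l.toSubmodule ⊔ tensorSub g l.toSubmodule ⊤ ∧
        ∀ a ∈ l, ⁅a, w⁆ = 0} =
    {w : g ⊗[ℂ] g |
        w ∈ tensorSub g (centralizerSub g l) l.toSubmodule ⊔
              tensorSub g l.toSubmodule (centralizerSub g l) ∧
        ∀ a ∈ l, ⁅a, w⁆ = 0} := by
  have hlie : ∀ a ∈ l, ∀ x, ⁅a, x⁆ ∈ m := fun a ha =>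
    lie_mem_of_isCompl habel hcompl hinv ha
  have hle : tensorSub g (centralizerSub g l) l.toSubmodule ⊔
      tensorSub g l.toSubmodule (centralizerSub g l) ≤
      tensorSub g ⊤ l.toSubmodule ⊔ tensorSub g l.toSubmodule ⊤ :=
    sup_le_sup (Submodule.map₂_le_map₂_left le_top) (Submodule.map₂_le_map₂_right le_top)
  ext w
  exact ⟨fun ⟨hw, hw₀⟩ => ⟨mem_sup_tensorSub_centralizerSub hcompl hlie habel hw hw₀, hw₀⟩,
    fun ⟨hw, hw₀⟩ => ⟨hle hw, hw₀⟩⟩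
end

section
/- Let $\mathfrak{g}$ be a finite-dimensional Lie algebra, $\mathfrak{l}\subseteq\mathfrak{g}$ a subalgebra acting semisimply on $\mathfrak{g}$, $\Omega\in(S^2\mathfrak{g})^{\mathfrak{g}}$ with associated ideal $\mathfrak{g}_\Omega$ (span of components of $\Omega$) on which the inverse form $(\cdot,\cdot)=\Omega^{-1}$ is defined, and suppose the restriction of this form to $\mathfrak{l}_\Omega=\mathfrak{l}\cap\mathfrak{g}_\Omega$ is nondegenerate. Then there exists an $\mathfrak{l}$-invariant complement $\mathfrak{m}$ of $\mathfrak{l}$ in $\mathfrak{g}$ such that $\Omega\in(\mathfrak{l}\otimes\mathfrak{l})\oplus(\mathfrak{m}\otimes\mathfrak{m})$. -/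
open scoped TensorProduct

/-- Contraction of `Ω ∈ g ⊗ g` with a functional in the first slot. -/
noncomputable def contractOmega (g : Type) [AddCommGroup g] [Module ℂ g]
    (Ω : g ⊗[ℂ] g) (ξ : Module.Dual ℂ g) : g :=
  TensorProduct.lid ℂ g (TensorProduct.map ξ LinearMap.id Ω)

/-!
Let `Ω♯ : g* → g` be the contraction `ξ ↦ (ξ ⊗ id) Ω` and `S = range Ω♯`. Symmetry of `Ω` makes
`(Ω♯ ζ, v) := ζ v` a well-defined nondegenerate symmetric form on `S` (the inverse form `Ω⁻¹`),
and `S` is the smallest subspace with `Ω ∈ S ⊗ S`, i.e. `S = g_Ω`. For `L ≤ S` a dimension count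
gives `dim L + dim L^⊥ = dim S`; so when `Ω⁻¹` is nondegenerate on `L`, `S = L ⊕ L^⊥` and
`L^⊥⊥ = L`, and contracting `Ω` with projections onto `L` and `L^⊥` shows
`Ω ∈ L ⊗ L + L^⊥ ⊗ L^⊥`. Invariance of `Ω` makes `Ω♯` equivariant, so for `L = l ∩ g_Ω` the
space `L^⊥` is `l`-invariant, and `m = L^⊥ ⊕ g'`, with `g'` an `l`-invariant complement of
`l + g_Ω`, is the required complement.
-/

open TensorProduct Module

theorem Submodule.finrank_comap_eq_of_le_range {K V W : Type*} [DivisionRing K]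
    [AddCommGroup V] [Module K V] [AddCommGroup W] [Module K W] [FiniteDimensional K V]
    (f : V →ₗ[K] W) {p : Submodule K W} (hp : p ≤ LinearMap.range f) :
    finrank K (p.comap f) = finrank K p + finrank K (LinearMap.ker f) := by
  have h := LinearMap.finrank_range_add_finrank_ker (f.domRestrict (p.comap f))
  rw [LinearMap.range_domRestrict, Submodule.map_comap_eq_of_le hp,
    LinearMap.ker_domRestrict] at h
  rw [← h, (Submodule.comapSubtypeEquivOfLe (LinearMap.ker_le_comap f)).finrank_eq]

theorem Submodule.exists_projection_of_disjoint {K V : Type*} [DivisionRing K]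
    [AddCommGroup V] [Module K V] {p q : Submodule K V} (h : Disjoint p q) :
    ∃ e : V →ₗ[K] V,
      (∀ v, e v ∈ p) ∧ (∀ v ∈ p, e v = v) ∧ ∀ v ∈ q, e v = 0 := by
  obtain ⟨r, hr⟩ := Submodule.exists_isCompl (p ⊔ q)
  have hpqr := h.isCompl_sup_right_of_isCompl_sup_left hr
  exact ⟨p.projection _ hpqr, p.projection_apply_mem hpqr,
    fun v hv => p.projection_apply_of_mem_left hpqr hv,
    fun v hv => p.projection_apply_of_mem_right hpqr (Submodule.mem_sup_left hv)⟩

section Contraction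

variable {V : Type} [AddCommGroup V] [Module ℂ V]

theorem contractOmega_tmul (a b : V) (ξ : Dual ℂ V) :
    contractOmega V (a ⊗ₜ b) ξ = ξ a • b := by
  simp [contractOmega]

theorem contractOmega_add (t t' : V ⊗[ℂ] V) (ξ : Dual ℂ V) :
    contractOmega V (t + t') ξ = contractOmega V t ξ + contractOmega V t' ξ := by
  simp [contractOmega]

noncomputable def contractOmegaₗ (Ω : V ⊗[ℂ] V) : Dual ℂ V →ₗ[ℂ] V where
  toFun := contractOmega V Ω
  map_add' ξ ζ := by simp [contractOmega, TensorProduct.map_add_left]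
  map_smul' c ξ := by simp [contractOmega, TensorProduct.map_smul_left]

theorem contractOmegaₗ_apply (Ω : V ⊗[ℂ] V) (ξ : Dual ℂ V) :
    contractOmegaₗ Ω ξ = contractOmega V Ω ξ := rfl

noncomputable abbrev omegaRange (Ω : V ⊗[ℂ] V) : Submodule ℂ V := LinearMap.range (contractOmegaₗ Ω)

theorem apply_contractOmega (t : V ⊗[ℂ] V) (ξ η : Dual ℂ V) :
    η (contractOmega V t ξ) = dualDistrib ℂ V V (ξ ⊗ₜ η) t := by
  induction t using TensorProduct.induction_on with
  | zero => simp [contractOmega]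
  | tmul a b => simp [contractOmega_tmul]
  | add x y hx hy => rw [contractOmega_add, map_add, hx, hy, map_add]

theorem apply_contractOmega_comm (t : V ⊗[ℂ] V) (ξ η : Dual ℂ V) :
    η (contractOmega V (TensorProduct.comm ℂ V V t) ξ) = ξ (contractOmega V t η) := by
  induction t using TensorProduct.induction_on with
  | zero => simp [contractOmega]
  | tmul a b => simp [contractOmega_tmul, mul_comm]
  | add x y hx hy => rw [map_add, contractOmega_add, contractOmega_add, map_add, map_add, hx, hy]

theorem contractOmega_map (f f' : V →ₗ[ℂ] V) (t : V ⊗[ℂ] V) (ξ : Dual ℂ V) :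
    contractOmega V (TensorProduct.map f f' t) ξ = f' (contractOmega V t (ξ ∘ₗ f)) := by
  induction t using TensorProduct.induction_on with
  | zero => simp [contractOmega]
  | tmul a b => simp [contractOmega_tmul]
  | add x y hx hy => rw [map_add, contractOmega_add, contractOmega_add, hx, hy, map_add]

theorem eq_of_contractOmega_eq [FiniteDimensional ℂ V] {t t' : V ⊗[ℂ] V}
    (h : ∀ ξ, contractOmega V t ξ = contractOmega V t' ξ) : t = t' := by
  rw [← sub_eq_zero, ← Module.forall_dual_apply_eq_zero_iff ℂ]
  intro φ
  obtain ⟨s, rfl⟩ := (dualDistribEquiv ℂ V V).surjective φ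
  induction s using TensorProduct.induction_on with
  | zero => simp
  | tmul ξ η =>
    change dualDistrib ℂ V V (ξ ⊗ₜ η) (t - t') = 0
    rw [map_sub, ← apply_contractOmega, ← apply_contractOmega, h, sub_self]
  | add x y hx hy => rw [map_add, LinearMap.add_apply, hx, hy, add_zero]

theorem map_mem_tensorSub {p q : Submodule ℂ V} {f f' : V →ₗ[ℂ] V}
    (hf : ∀ v, f v ∈ p) (hf' : ∀ v, f' v ∈ q) (t : V ⊗[ℂ] V) :
    TensorProduct.map f f' t ∈ tensorSub V p q := by
  induction t using TensorProduct.induction_on with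
  | zero => rw [map_zero]; exact zero_mem _
  | tmul a b => exact Submodule.apply_mem_map₂ _ (hf a) (hf' b)
  | add x y hx hy => rw [map_add]; exact add_mem hx hy

theorem contractOmega_mem_of_mem_tensorSub {p q : Submodule ℂ V} {t : V ⊗[ℂ] V}
    (ht : t ∈ tensorSub V p q) (ξ : Dual ℂ V) : contractOmega V t ξ ∈ q := by
  have hle : tensorSub V p q ≤
      q.comap ((TensorProduct.lid ℂ V).toLinearMap ∘ₗ TensorProduct.map ξ LinearMap.id) :=
    Submodule.map₂_le.mpr fun a _ b hb => by simpa using q.smul_mem (ξ a) hb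
  exact hle ht

end Contraction

/-- The orthogonal of `L` for the inverse form `(Ω♯ ζ, v) = ζ v` of `Ω` on `range Ω♯`. -/
noncomputable def omegaOrth {V : Type} [AddCommGroup V] [Module ℂ V] (Ω : V ⊗[ℂ] V)
    (L : Submodule ℂ V) : Submodule ℂ V :=
  (L.comap (contractOmegaₗ Ω)).dualCoannihilator

section Orthogonal

variable {V : Type} [AddCommGroup V] [Module ℂ V] {Ω : V ⊗[ℂ] V} {L : Submodule ℂ V}

theorem mem_omegaOrth_iff {v : V} :
    v ∈ omegaOrth Ω L ↔ ∀ ζ, contractOmega V Ω ζ ∈ L → ζ v = 0 := by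
  simp [omegaOrth, Submodule.mem_dualCoannihilator, contractOmegaₗ_apply]

theorem omegaOrth_omegaRange : omegaOrth Ω (omegaRange Ω) = ⊥ := by
  refine (Submodule.eq_bot_iff _).mpr fun v hv => ?_
  rw [← Module.forall_dual_apply_eq_zero_iff ℂ]
  exact fun ζ => mem_omegaOrth_iff.mp hv ζ ⟨ζ, rfl⟩

variable (hΩ : TensorProduct.comm ℂ V V Ω = Ω)
include hΩ

theorem apply_contractOmega_symm (ξ η : Dual ℂ V) :
    η (contractOmega V Ω ξ) = ξ (contractOmega V Ω η) := by
  simpa [hΩ] using apply_contractOmega_comm Ω ξ η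

theorem contractOmega_eq_zero_iff (ξ : Dual ℂ V) :
    contractOmega V Ω ξ = 0 ↔ ∀ v ∈ omegaRange Ω, ξ v = 0 := by
  rw [← Module.forall_dual_apply_eq_zero_iff ℂ]
  refine ⟨?_, fun h η => ?_⟩
  · rintro h _ ⟨η, rfl⟩
    rw [contractOmegaₗ_apply, ← apply_contractOmega_symm hΩ, h]
  · rw [apply_contractOmega_symm hΩ]
    exact h _ ⟨η, rfl⟩

theorem contractOmega_mem_omegaOrth_iff (hL : L ≤ omegaRange Ω)
    (ξ : Dual ℂ V) : contractOmega V Ω ξ ∈ omegaOrth Ω L ↔ ∀ v ∈ L, ξ v = 0 := by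
  rw [mem_omegaOrth_iff]
  refine ⟨fun h v hv => ?_, fun h ζ hζ => ?_⟩
  · obtain ⟨η, rfl⟩ := hL hv
    rw [contractOmegaₗ_apply, ← apply_contractOmega_symm hΩ]
    exact h η hv
  · rw [apply_contractOmega_symm hΩ]
    exact h _ hζ

theorem omegaOrth_le_omegaRange : omegaOrth Ω L ≤ omegaRange Ω := by
  intro v hv
  rw [← Subspace.dualAnnihilator_dualCoannihilator_eq (W := omegaRange Ω),
    Submodule.mem_dualCoannihilator]
  intro ξ hξ
  refine mem_omegaOrth_iff.mp hv ξ ?_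
  rw [(contractOmega_eq_zero_iff hΩ ξ).mpr ((Submodule.mem_dualAnnihilator ξ).mp hξ)]
  exact zero_mem L

theorem le_omegaOrth_omegaOrth (hL : L ≤ omegaRange Ω) :
    L ≤ omegaOrth Ω (omegaOrth Ω L) := by
  intro v hv
  obtain ⟨η, rfl⟩ := hL hv
  exact (contractOmega_mem_omegaOrth_iff hΩ (omegaOrth_le_omegaRange hΩ) η).mpr
    fun w hw => mem_omegaOrth_iff.mp hw η hv

omit hΩ in
theorem finrank_add_finrank_omegaOrth [FiniteDimensional ℂ V]
    (hL : L ≤ omegaRange Ω) :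
    finrank ℂ L + finrank ℂ (omegaOrth Ω L) = finrank ℂ (omegaRange Ω) := by
  have hcoann := Subspace.finrank_add_finrank_dualCoannihilator_eq (L.comap (contractOmegaₗ Ω))
  have hrank := LinearMap.finrank_range_add_finrank_ker (contractOmegaₗ Ω)
  rw [Submodule.finrank_comap_eq_of_le_range _ hL, Subspace.dual_finrank_eq] at *
  rw [omegaOrth, omegaRange]
  omega

theorem omegaOrth_omegaOrth [FiniteDimensional ℂ V]
    (hL : L ≤ omegaRange Ω) : omegaOrth Ω (omegaOrth Ω L) = L := by
  have h₁ := finrank_add_finrank_omegaOrth hL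
  have h₂ := finrank_add_finrank_omegaOrth (omegaOrth_le_omegaRange hΩ (L := L))
  exact (Submodule.eq_of_le_of_finrank_eq (le_omegaOrth_omegaOrth hΩ hL) (by omega)).symm

theorem sup_omegaOrth_eq_omegaRange [FiniteDimensional ℂ V]
    (hL : L ≤ omegaRange Ω) (hnd : Disjoint L (omegaOrth Ω L)) :
    L ⊔ omegaOrth Ω L = omegaRange Ω := by
  refine Submodule.eq_of_le_of_finrank_eq (sup_le hL (omegaOrth_le_omegaRange hΩ)) ?_
  have := Submodule.finrank_sup_add_finrank_inf_eq L (omegaOrth Ω L)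
  rw [hnd.eq_bot, finrank_bot, add_zero] at this
  rw [this, finrank_add_finrank_omegaOrth hL]

theorem mem_tensorSub_sup_omegaOrth [FiniteDimensional ℂ V]
    (hL : L ≤ omegaRange Ω) (hnd : Disjoint L (omegaOrth Ω L)) :
    Ω ∈ tensorSub V L L ⊔ tensorSub V (omegaOrth Ω L) (omegaOrth Ω L) := by
  obtain ⟨e, he_mem, he_left, he_right⟩ := Submodule.exists_projection_of_disjoint hnd
  obtain ⟨f, hf_mem, hf_left, hf_right⟩ := Submodule.exists_projection_of_disjoint hnd.symm
  have hsum : ∀ ξ, contractOmega V Ω (ξ ∘ₗ e) + contractOmega V Ω (ξ ∘ₗ f) =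
      contractOmega V Ω ξ := by
    intro ξ
    have hS : ∀ v ∈ omegaRange Ω, (ξ ∘ₗ e + ξ ∘ₗ f - ξ) v = 0 := by
      rw [← sup_omegaOrth_eq_omegaRange hΩ hL hnd]
      intro v hv
      obtain ⟨a, ha, b, hb, rfl⟩ := Submodule.mem_sup.mp hv
      simp [he_left a ha, he_right b hb, hf_left b hb, hf_right a ha]
    have h0 := (contractOmega_eq_zero_iff hΩ _).mpr hS
    rwa [← contractOmegaₗ_apply, map_sub, map_add, sub_eq_zero] at h0
  have hsplit : Ω = TensorProduct.map e e Ω + TensorProduct.map f f Ω := by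
    refine eq_of_contractOmega_eq fun ξ => ?_
    have he : contractOmega V Ω (ξ ∘ₗ e) ∈ L := by
      rw [← omegaOrth_omegaOrth hΩ hL,
        contractOmega_mem_omegaOrth_iff hΩ (omegaOrth_le_omegaRange hΩ)]
      intro v hv
      simp [he_right v hv]
    have hf : contractOmega V Ω (ξ ∘ₗ f) ∈ omegaOrth Ω L := by
      rw [contractOmega_mem_omegaOrth_iff hΩ hL]
      intro v hv
      simp [hf_right v hv]
    rw [contractOmega_add, contractOmega_map, contractOmega_map, he_left _ he, hf_left _ hf,
      hsum]
  have hmem := Submodule.add_mem_sup (map_mem_tensorSub he_mem he_mem Ω)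
    (map_mem_tensorSub hf_mem hf_mem Ω)
  rwa [← hsplit] at hmem

theorem sInf_tensorSub_eq_omegaRange [FiniteDimensional ℂ V] :
    sInf {W : Submodule ℂ V | Ω ∈ tensorSub V W W} = omegaRange Ω := by
  have hS := mem_tensorSub_sup_omegaOrth hΩ le_rfl (by simp [omegaOrth_omegaRange])
  rw [omegaOrth_omegaRange, show tensorSub V ⊥ ⊥ = ⊥ from Submodule.map₂_bot_left _ _,
    sup_bot_eq] at hS
  refine le_antisymm (sInf_le hS) (le_sInf fun W hW => ?_)
  rintro _ ⟨ξ, rfl⟩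
  exact contractOmega_mem_of_mem_tensorSub hW ξ

end Orthogonal

theorem Submodule.lie_mem_sup {R L : Type*} [CommRing R] [LieRing L] [LieAlgebra R L]
    {p q : Submodule R L} {x : L} (hp : ∀ v ∈ p, ⁅x, v⁆ ∈ p)
    (hq : ∀ v ∈ q, ⁅x, v⁆ ∈ q) {v : L} (hv : v ∈ p ⊔ q) : ⁅x, v⁆ ∈ p ⊔ q := by
  obtain ⟨a, ha, b, hb, rfl⟩ := Submodule.mem_sup.mp hv
  rw [lie_add]
  exact Submodule.add_mem_sup (hp a ha) (hq b hb)

section Invariance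

variable {g : Type} [LieRing g] [LieAlgebra ℂ g] {Ω : g ⊗[ℂ] g} {x : g}

theorem contractOmega_lie (x : g) (t : g ⊗[ℂ] g) (ξ : Dual ℂ g) :
    contractOmega g ⁅x, t⁆ ξ =
      contractOmega g t (ξ ∘ₗ LieAlgebra.ad ℂ g x) + ⁅x, contractOmega g t ξ⁆ := by
  induction t using TensorProduct.induction_on with
  | zero => simp [contractOmega]
  | tmul a b =>
    simp [TensorProduct.LieModule.lie_tmul_right, contractOmega_add, contractOmega_tmul,
      LieAlgebra.ad_apply]
  | add s u hs hu =>
    rw [lie_add, contractOmega_add, hs, hu, contractOmega_add, contractOmega_add, lie_add]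
    abel

theorem lie_contractOmega (hx : ⁅x, Ω⁆ = 0) (ξ : Dual ℂ g) :
    ⁅x, contractOmega g Ω ξ⁆ = -contractOmega g Ω (ξ ∘ₗ LieAlgebra.ad ℂ g x) := by
  rw [eq_neg_iff_add_eq_zero, add_comm, ← contractOmega_lie, hx]
  simp [contractOmega]

theorem lie_mem_omegaRange (hx : ⁅x, Ω⁆ = 0) {v : g} (hv : v ∈ omegaRange Ω) :
    ⁅x, v⁆ ∈ omegaRange Ω := by
  obtain ⟨ξ, rfl⟩ := hv
  rw [contractOmegaₗ_apply, lie_contractOmega hx]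
  exact neg_mem ⟨_, rfl⟩

theorem lie_mem_omegaOrth (hx : ⁅x, Ω⁆ = 0) {L : Submodule ℂ g}
    (hL : ∀ u ∈ L, ⁅x, u⁆ ∈ L) {v : g} (hv : v ∈ omegaOrth Ω L) : ⁅x, v⁆ ∈ omegaOrth Ω L := by
  rw [mem_omegaOrth_iff] at hv ⊢
  intro ζ hζ
  have hζx : contractOmega g Ω (ζ ∘ₗ LieAlgebra.ad ℂ g x) ∈ L := by
    rw [← neg_neg (contractOmega g Ω _), ← lie_contractOmega hx]
    exact neg_mem (hL _ hζ)
  simpa [LieAlgebra.ad_apply] using hv _ hζx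

end Invariance

/-- if `l` acts semisimply on `g`, `Ω ∈ (S²g)^g`, `g_Ω` is the span
of the components of `Ω`, and the inverse form of `Ω` restricted to `l_Ω = l ∩ g_Ω`
is nondegenerate, then there is an `l`-invariant complement `m` of `l` with
`Ω ∈ (l⊗l) ⊕ (m⊗m)`. -/
theorem stmt19 (g : Type) [LieRing g] [LieAlgebra ℂ g] [FiniteDimensional ℂ g]
    (l : LieSubalgebra ℂ g)
    -- `l` acts semisimply on `g`: every `l`-invariant subspace has an `l`-invariant complement
    (hss : ∀ p : Submodule ℂ g, (∀ x ∈ l, ∀ v ∈ p, ⁅x, v⁆ ∈ p) →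
      ∃ q : Submodule ℂ g, IsCompl p q ∧ ∀ x ∈ l, ∀ v ∈ q, ⁅x, v⁆ ∈ q)
    (Ω : g ⊗[ℂ] g)
    (hsymm : TensorProduct.comm ℂ g g Ω = Ω)
    (hinv : ∀ x : g, ⁅x, Ω⁆ = 0)
    -- `g_Ω` : the span of the components of `Ω`
    (gΩ : Submodule ℂ g) (hgΩ : gΩ = sInf {W : Submodule ℂ g | Ω ∈ tensorSub g W W})
    -- nondegeneracy of the inverse form `Ω⁻¹` on `l_Ω = l ∩ g_Ω`
    (hnd : ∀ u ∈ l.toSubmodule ⊓ gΩ,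
      (∀ ξ : Module.Dual ℂ g, contractOmega g Ω ξ = u →
        ∀ v ∈ l.toSubmodule ⊓ gΩ, ξ v = 0) → u = 0) :
    ∃ m : Submodule ℂ g, IsCompl l.toSubmodule m ∧
      (∀ x ∈ l, ∀ v ∈ m, ⁅x, v⁆ ∈ m) ∧
      Ω ∈ tensorSub g l.toSubmodule l.toSubmodule ⊔ tensorSub g m m := by
  obtain rfl : gΩ = omegaRange Ω := hgΩ.trans (sInf_tensorSub_eq_omegaRange hsymm)
  set lΩ := l.toSubmodule ⊓ omegaRange Ω
  have hlΩ : lΩ ≤ omegaRange Ω := inf_le_right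
  have hlΩ_nd : Disjoint lΩ (omegaOrth Ω lΩ) :=
    Submodule.disjoint_def.mpr fun u hu hu' => hnd u hu fun ξ hξ =>
      (contractOmega_mem_omegaOrth_iff hsymm hlΩ ξ).mp (hξ ▸ hu')
  have hl_disj : Disjoint l.toSubmodule (omegaOrth Ω lΩ) :=
    Submodule.disjoint_def.mpr fun v hl hm =>
      Submodule.disjoint_def.mp hlΩ_nd v ⟨hl, omegaOrth_le_omegaRange hsymm hm⟩ hm
  have hl_sup : l.toSubmodule ⊔ omegaRange Ω =
      l.toSubmodule ⊔ omegaOrth Ω lΩ := by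
    rw [← sup_omegaOrth_eq_omegaRange hsymm hlΩ hlΩ_nd, ← sup_assoc,
      sup_eq_left.mpr (inf_le_left : lΩ ≤ _)]
  have hlΩ_inv : ∀ x ∈ l, ∀ v ∈ lΩ, ⁅x, v⁆ ∈ lΩ := fun x hx v hv =>
    ⟨l.lie_mem hx hv.1, lie_mem_omegaRange (hinv x) hv.2⟩
  have horth_inv : ∀ x ∈ l, ∀ v ∈ omegaOrth Ω lΩ, ⁅x, v⁆ ∈ omegaOrth Ω lΩ :=
    fun x hx _ => lie_mem_omegaOrth (hinv x) (hlΩ_inv x hx)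
  obtain ⟨g', hg', hg'_inv⟩ := hss _ fun x hx _ =>
    Submodule.lie_mem_sup (fun _ => l.lie_mem hx) (fun _ => lie_mem_omegaRange (hinv x))
  refine ⟨omegaOrth Ω lΩ ⊔ g', hl_disj.isCompl_sup_right_of_isCompl_sup_left (hl_sup ▸ hg'),
    fun x hx _ => Submodule.lie_mem_sup (horth_inv x hx) (hg'_inv x hx), ?_⟩
  have hle : tensorSub g lΩ lΩ ⊔ tensorSub g (omegaOrth Ω lΩ) (omegaOrth Ω lΩ) ≤
      tensorSub g l.toSubmodule l.toSubmodule ⊔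
        tensorSub g (omegaOrth Ω lΩ ⊔ g') (omegaOrth Ω lΩ ⊔ g') :=
    sup_le_sup (Submodule.map₂_le_map₂ inf_le_left inf_le_left)
      (Submodule.map₂_le_map₂ le_sup_left le_sup_left)
  exact hle (mem_tensorSub_sup_omegaOrth hsymm hlΩ hlΩ_nd)
end
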